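/- For all real numbers x, y, z > 0 with x > z and y > z, there exists a partition of the square [0, x+y−z]² into finitely many boxes, each of which has a side whose length belongs to the set {x, y, z}. -/
import Mathlib


open BoxIntegral

/-- The (closed) set of points of an `n`-dimensional box. -/
def boxSet {n : ℕ} (B : Box (Fin n)) : Set (Fin n → ℝ) :=
  Set.Icc B.lower B.upper

/-- The box `B` has a side whose length belongs to `X`. -/
def hasSideIn {n : ℕ} (X : Set ℝ) (B : Box (Fin n)) : Prop :=
  ∃ i : Fin n, B.upper i - B.lower i ∈ X

/-- `Q` is a partition of `P`: a finite collection of boxes with pairwise disjoint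
interiors whose union is `P`. -/
def isBoxPartition {n k : ℕ} (P : Box (Fin n)) (Q : Fin k → Box (Fin n)) : Prop :=
  (∀ j j' : Fin k, j ≠ j' →
    Disjoint (interior (boxSet (Q j))) (interior (boxSet (Q j')))) ∧
  (⋃ j, boxSet (Q j)) = boxSet P

/-- Property (W_n): for every `n`-dimensional box `P` and every partition of `P`
such that each constituent box has a side with length in `X`, the box `P` itself
has a side with length in `X`. -/
def PropertyW (n : ℕ) (X : Set ℝ) : Prop :=
  ∀ (P : Box (Fin n)) (k : ℕ) (Q : Fin k → Box (Fin n)),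
    isBoxPartition P Q → (∀ j, hasSideIn X (Q j)) → hasSideIn X P

lemma interior_boxSet {n : ℕ} (B : Box (Fin n)) :
    interior (boxSet B) = Set.pi Set.univ fun i => Set.Ioo (B.lower i) (B.upper i) := by
  rw [boxSet, ← Set.pi_univ_Icc, interior_pi_set Set.finite_univ]
  simp

lemma disj_of_coord {B B' : Box (Fin 2)} (i : Fin 2) (h : B.upper i ≤ B'.lower i) :
    Disjoint (interior (boxSet B)) (interior (boxSet B')) := by
  rw [interior_boxSet, interior_boxSet, Set.disjoint_left]
  intro p hp hp'
  have h1 := hp i (Set.mem_univ i)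
  have h2 := hp' i (Set.mem_univ i)
  simp only [Set.mem_Ioo] at h1 h2
  linarith

lemma mem_boxSet_iff (p : Fin 2 → ℝ) (B : Box (Fin 2)) :
    p ∈ boxSet B ↔ (B.lower 0 ≤ p 0 ∧ p 0 ≤ B.upper 0) ∧
      (B.lower 1 ≤ p 1 ∧ p 1 ≤ B.upper 1) := by
  simp only [boxSet, Set.mem_Icc, Pi.le_def, Fin.forall_fin_two]
  tauto

theorem square_partition_three_lengths (x y z : ℝ) (hx : 0 < x) (hy : 0 < y) (hz : 0 < z)
    (hxz : z < x) (hyz : z < y) :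
    ∃ (P : Box (Fin 2)) (k : ℕ) (Q : Fin k → Box (Fin 2)),
      P.lower = ![0, 0] ∧ P.upper = ![x + y - z, x + y - z] ∧
      isBoxPartition P Q ∧ (∀ j, hasSideIn {x, y, z} (Q j)) := by
  have b0 : Box (Fin 2) := ⟨![0,0], ![x-z,y], by intro i; fin_cases i <;> simp <;> linarith⟩
  refine ⟨⟨![0,0], ![x+y-z, x+y-z], by intro i; fin_cases i <;> simp <;> linarith⟩, 5,
    ![⟨![0,0], ![x-z,y], by intro i; fin_cases i <;> simp <;> linarith⟩,
      ⟨![0,y], ![x, x+y-z], by intro i; fin_cases i <;> simp <;> linarith⟩,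
      ⟨![x,y-z], ![x+y-z, x+y-z], by intro i; fin_cases i <;> simp <;> linarith⟩,
      ⟨![x-z,0], ![x+y-z, y-z], by intro i; fin_cases i <;> simp <;> linarith⟩,
      ⟨![x-z,y-z], ![x, y], by intro i; fin_cases i <;> simp <;> linarith⟩],
    rfl, rfl, ⟨?_, ?_⟩, ?_⟩
  · -- pairwise disjoint interiors
    intro j j' hne
    fin_cases j <;> fin_cases j' <;>
      first
      | exact absurd rfl hne
      | (apply disj_of_coord (0 : Fin 2); simp <;> linarith)
      | (refine (disj_of_coord (0 : Fin 2) ?_).symm; simp <;> linarith)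
      | (apply disj_of_coord (1 : Fin 2); simp <;> linarith)
      | (refine (disj_of_coord (1 : Fin 2) ?_).symm; simp <;> linarith)
  · -- union
    ext p
    simp only [Set.mem_iUnion, mem_boxSet_iff]
    constructor
    · rintro ⟨j, hj⟩
      fin_cases j <;> simp at hj ⊢ <;>
        refine ⟨⟨?_, ?_⟩, ?_, ?_⟩ <;> linarith [hj.1.1, hj.1.2, hj.2.1, hj.2.2]
    · intro hp
      simp only [Matrix.cons_val_zero, Matrix.cons_val_one, Matrix.head_cons] at hp
      obtain ⟨⟨h00, h01⟩, h10, h11⟩ := hp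
      by_cases h0 : p 0 ≤ x - z
      · by_cases h1 : p 1 ≤ y
        · exact ⟨0, by simp; refine ⟨⟨?_, ?_⟩, ?_, ?_⟩ <;> linarith⟩
        · exact ⟨1, by simp; refine ⟨⟨?_, ?_⟩, ?_, ?_⟩ <;> linarith⟩
      · push_neg at h0
        by_cases h1 : p 1 ≤ y - z
        · exact ⟨3, by simp; refine ⟨⟨?_, ?_⟩, ?_, ?_⟩ <;> linarith⟩
        · push_neg at h1
          by_cases h2 : x ≤ p 0
          · exact ⟨2, by simp; refine ⟨⟨?_, ?_⟩, ?_, ?_⟩ <;> linarith⟩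
          · push_neg at h2
            by_cases h3 : p 1 ≤ y
            · exact ⟨4, by simp; refine ⟨⟨?_, ?_⟩, ?_, ?_⟩ <;> linarith⟩
            · exact ⟨1, by simp; refine ⟨⟨?_, ?_⟩, ?_, ?_⟩ <;> linarith⟩
  · -- each box has a side in {x, y, z}
    intro j
    fin_cases j
    · exact ⟨1, by simp⟩
    · exact ⟨0, by simp⟩
    · exact ⟨1, by simp <;> ring_nf <;> simp⟩
    · exact ⟨0, by simp <;> ring_nf <;> simp⟩
    · exact ⟨0, by simp <;> ring_nf <;> simp⟩
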